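/- Let r := (s₁ ∘ s₂)² ∈ W. Then r has order 3, r maps the root lattice L = {(a,b) ∈ ℤ² : a + b is even} into itself, and for every group homomorphism f from the additive group L to the multiplicative group ℂˣ satisfying f(r·x) = f(x) for all x ∈ L, one has f(γ) = 1 for every long root γ ∈ Φ (i.e. every γ ∈ Φ with B(γ,γ) = 12). (This is the key step excluding elliptic endoscopic tori of G₂ attached to the order-3 rotation in the Weyl group.) -/

import Mathlib

noncomputable section

/-- The bilinear form `B((x₁,x₂),(y₁,y₂)) = x₁y₁ + 3x₂y₂` on `ℝ²`. -/
def B (x y : ℝ × ℝ) : ℝ := x.1 * y.1 + 3 * x.2 * y.2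

/-- The short simple root of `G₂`. -/
def α₁ : ℝ × ℝ := (-1, 1)
/-- The long simple root of `G₂`. -/
def α₂ : ℝ × ℝ := (3, -1)

/-- The `B`-orthogonal reflection in `α`, as a linear map. -/
def reflLM (α : ℝ × ℝ) : (ℝ × ℝ) →ₗ[ℝ] (ℝ × ℝ) where
  toFun x := x - (2 * B x α / B α α) • α
  map_add' x y := by
    simp only [B, Prod.fst_add, Prod.snd_add, Prod.smul_mk, smul_eq_mul, Prod.mk_add_mk,
      Prod.ext_iff, Prod.fst_sub, Prod.snd_sub, Prod.smul_fst, Prod.smul_snd]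
    constructor <;> ring
  map_smul' c x := by
    simp only [B, Prod.smul_fst, Prod.smul_snd, smul_eq_mul, RingHom.id_apply,
      Prod.ext_iff, Prod.fst_sub, Prod.snd_sub]
    constructor <;> ring

/-- The `B`-orthogonal reflection in `α`, as a linear automorphism, given that the
reflection is involutive. -/
def reflLE (α : ℝ × ℝ) (h : (reflLM α).comp (reflLM α) = LinearMap.id) :
    (ℝ × ℝ) ≃ₗ[ℝ] (ℝ × ℝ) :=
  LinearEquiv.ofLinear (reflLM α) (reflLM α) h h

lemma invol₁ : (reflLM α₁).comp (reflLM α₁) = LinearMap.id := by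
  apply LinearMap.ext
  intro x
  simp only [LinearMap.comp_apply, LinearMap.id_apply, reflLM, LinearMap.coe_mk, AddHom.coe_mk,
    B, α₁, Prod.ext_iff, Prod.fst_sub, Prod.snd_sub, Prod.smul_fst, Prod.smul_snd, smul_eq_mul]
  norm_num
  constructor <;> ring

lemma invol₂ : (reflLM α₂).comp (reflLM α₂) = LinearMap.id := by
  apply LinearMap.ext
  intro x
  simp only [LinearMap.comp_apply, LinearMap.id_apply, reflLM, LinearMap.coe_mk, AddHom.coe_mk,
    B, α₂, Prod.ext_iff, Prod.fst_sub, Prod.snd_sub, Prod.smul_fst, Prod.smul_snd, smul_eq_mul]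
  norm_num
  constructor <;> ring

/-- The simple reflection `s₁ = s_{α₁}`. -/
def s₁ : (ℝ × ℝ) ≃ₗ[ℝ] (ℝ × ℝ) := reflLE α₁ invol₁

/-- The simple reflection `s₂ = s_{α₂}`. -/
def s₂ : (ℝ × ℝ) ≃ₗ[ℝ] (ℝ × ℝ) := reflLE α₂ invol₂

/-- The Weyl group of `G₂`, as the subgroup of linear automorphisms of `ℝ²`
generated by `s₁` and `s₂`. -/
def W : Subgroup ((ℝ × ℝ) ≃ₗ[ℝ] (ℝ × ℝ)) := Subgroup.closure {s₁, s₂}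

/-- The set of roots of `G₂`. -/
def Φ : Set (ℝ × ℝ) :=
  {(2,0), (-2,0), (1,1), (1,-1), (-1,1), (-1,-1),
   (0,2), (0,-2), (3,1), (3,-1), (-3,1), (-3,-1)}

/-- The root lattice `L = {(a,b) ∈ ℤ² : a + b even}` of `G₂`, as an additive
subgroup of `ℝ²`. -/
def L : AddSubgroup (ℝ × ℝ) where
  carrier := {x | ∃ a b : ℤ, x = ((a : ℝ), (b : ℝ)) ∧ Even (a + b)}
  zero_mem' := ⟨0, 0, by ext <;> simp, by decide⟩
  add_mem' := by
    rintro x y ⟨a, b, rfl, hab⟩ ⟨c, d, rfl, hcd⟩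
    exact ⟨a + c, b + d, by push_cast; rw [Prod.mk_add_mk],
      by rw [show a + c + (b + d) = (a + b) + (c + d) by ring]; exact hab.add hcd⟩
  neg_mem' := by
    rintro x ⟨a, b, rfl, hab⟩
    exact ⟨-a, -b, by push_cast; rfl,
      by rw [show -a + -b = -(a + b) by ring]; exact hab.neg⟩

/-- The order-3 rotation `r = (s₁ s₂)²` in the Weyl group of `G₂`. -/
def r : (ℝ × ℝ) ≃ₗ[ℝ] (ℝ × ℝ) := (s₁ * s₂) ^ 2

/-
An `r`-invariant character is trivial on every `δ - r δ`. Every `(a, b) ∈ L` with `3 ∣ a` is of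
this form, with `δ = (m, m - 2k)` for `a = 3k`, `a + b = 2m`; and a lattice vector with
`a² + 3b² = 12` has `3 ∣ a`, so every long root lies in `(1 - r) L`.
-/

lemma map_sub_eq_one_of_map_eq {A M : Type*} [AddGroup A] [Group M] {f : A → M}
    (hf : ∀ x y, f (x + y) = f x * f y) {x y : A} (h : f y = f x) : f (x - y) = 1 := by
  have hx : f x = f (x - y) * f x := by rw [← h, ← hf, sub_add_cancel, h]
  exact right_eq_mul.mp hx

lemma r_apply (x : ℝ × ℝ) : r x = ((-x.1 + 3 * x.2) / 2, (-x.1 - x.2) / 2) := by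
  simp only [r, pow_two, LinearEquiv.mul_apply, s₁, s₂, reflLE, LinearEquiv.coe_ofLinearMap,
    reflLM, LinearMap.coe_mk, AddHom.coe_mk, B, α₁, α₂, Prod.fst_sub, Prod.snd_sub,
    Prod.smul_fst, Prod.smul_snd, smul_eq_mul, Prod.ext_iff]
  constructor <;> ring

lemma r_pow_three : r ^ 3 = 1 := by
  ext x <;>
  · simp only [pow_succ, pow_zero, one_mul, LinearEquiv.mul_apply, r_apply, LinearEquiv.coe_one,
      id_eq]
    ring

lemma orderOf_r : orderOf r = 3 := by
  have : Fact (Nat.Prime 3) := ⟨Nat.prime_three⟩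
  refine orderOf_eq_prime r_pow_three fun h => ?_
  have h20 := congrArg (fun e : (ℝ × ℝ) ≃ₗ[ℝ] (ℝ × ℝ) => (e (2, 0)).1) h
  norm_num [r_apply] at h20

lemma r_mem_L {x : ℝ × ℝ} (hx : x ∈ L) : r x ∈ L := by
  obtain ⟨a, b, rfl, k, hk⟩ := hx
  refine ⟨-k + 2 * b, -k, ?_, ⟨b - k, by ring⟩⟩
  have hk' : (a : ℝ) + b = k + k := by exact_mod_cast hk
  rw [r_apply, Prod.ext_iff]
  push_cast
  constructor <;> linarith

lemma exists_mem_L_sub_r_eq {a b : ℤ} (hab : Even (a + b)) (ha : 3 ∣ a) :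
    ∃ δ ∈ L, δ - r δ = ((a : ℝ), (b : ℝ)) := by
  obtain ⟨k, rfl⟩ := ha
  obtain ⟨m, hm⟩ := hab
  have hm' : (3 * k : ℝ) + b = m + m := by exact_mod_cast hm
  refine ⟨((m : ℝ), ((m - 2 * k : ℤ) : ℝ)), ⟨m, m - 2 * k, rfl, ⟨m - k, by ring⟩⟩, ?_⟩
  rw [r_apply, Prod.ext_iff]
  push_cast
  constructor <;> dsimp only [Prod.fst_sub, Prod.snd_sub] <;> linarith

lemma three_dvd_of_B_self_eq_twelve {a b : ℤ}
    (h : B ((a : ℝ), (b : ℝ)) ((a : ℝ), (b : ℝ)) = 12) : 3 ∣ a := by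
  have hab : a * a + 3 * b * b = 12 := by
    simp only [B] at h
    exact_mod_cast h
  have h3 : (3 : ℤ) ∣ a * a := ⟨4 - b * b, by linarith⟩
  exact (Int.prime_three.dvd_or_dvd h3).elim id id

/-- The element `r = (s₁s₂)²` has order 3, preserves the root lattice `L`, and any
homomorphism `L → ℂˣ` invariant under `r` is trivial on all long roots of `G₂`:
the key step excluding elliptic endoscopic tori of `G₂` attached to the order-3
rotation in the Weyl group. -/
theorem stmt15 :
    orderOf r = 3 ∧
    (∀ x : ℝ × ℝ, x ∈ L → r x ∈ L) ∧
    ∀ f : L → ℂˣ, (∀ x y : L, f (x + y) = f x * f y) →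
      (∀ (x : L) (hx : r (x : ℝ × ℝ) ∈ L), f ⟨r (x : ℝ × ℝ), hx⟩ = f x) →
      ∀ γ : L, (γ : ℝ × ℝ) ∈ Φ → B (γ : ℝ × ℝ) (γ : ℝ × ℝ) = 12 → f γ = 1 := by
  refine ⟨orderOf_r, fun _ => r_mem_L, fun f hf hinv γ _ hlong => ?_⟩
  obtain ⟨a, b, hγ, hab⟩ := γ.2
  rw [hγ] at hlong
  obtain ⟨δ, hδ, hδγ⟩ := exists_mem_L_sub_r_eq hab (three_dvd_of_B_self_eq_twelve hlong)
  have hγδ : γ = ⟨δ, hδ⟩ - ⟨r δ, r_mem_L hδ⟩ := Subtype.ext (by simp [hδγ, hγ])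
  rw [hγδ]
  exact map_sub_eq_one_of_map_eq hf (hinv ⟨δ, hδ⟩ (r_mem_L hδ))
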